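/- arXiv:1809.09524 — 2 statements merged into one kernel-verified Lean document; each statement's English description precedes it below -/
import Mathlib

section
/- Let S, I_1, ..., I_k, and Z be independent nonnegative random variables, where S is exponentially distributed with rate λ_S > 0, each I_j is exponentially distributed with rate λ_j > 0, and Z is an arbitrary nonnegative random variable. Then for all x ≥ 0, the CDF of the ratio γ = S/(Z + Σ_{j=1}^k I_j) satisfies P(γ ≤ x) = 1 − E[exp(−λ_S x Z)] · ∏_{j=1}^k λ_j/(λ_j + λ_S x). -/
/-!
`S` is independent of the denominator `D = Z + ∑ j, I j`, so conditioning on `D` and using the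
exponential CDF gives `P(S ≤ x D) = E[1 - exp (-λ_S x D)] = 1 - mgf D (-λ_S x)`. By mutual
independence this moment generating function factors into that of `Z` times those of the `I j`,
and an exponential variable of rate `λ` has `mgf (-c) = λ / (λ + c)`.
-/

open MeasureTheory ProbabilityTheory Set

namespace ProbabilityTheory

lemma mgf_id_expMeasure {r t : ℝ} (hr : 0 < r) (ht : t < r) :
    mgf id (expMeasure r) t = r / (r - t) := by
  have hdensity : ∀ y, (exponentialPDF r y).toReal • Real.exp (t * y)
      = (Ici 0).indicator (fun y => r * Real.exp ((t - r) * y)) y := by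
    intro y
    by_cases hy : 0 ≤ y
    · rw [exponentialPDF_of_nonneg hy, ENNReal.toReal_ofReal (by positivity), smul_eq_mul,
        indicator_of_mem (mem_Ici.mpr hy), mul_assoc, ← Real.exp_add]
      ring_nf
    · rw [exponentialPDF_of_neg (not_le.mp hy), indicator_of_notMem (by simpa using hy)]
      simp
  calc mgf id (expMeasure r) t
      = ∫ y, (exponentialPDF r y).toReal • Real.exp (t * y) :=
        integral_withDensity_eq_integral_toReal_smul
          (measurable_gammaPDFReal 1 r).ennreal_ofReal
          (ae_of_all _ fun _ => ENNReal.ofReal_lt_top) _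
    _ = r * ∫ y in Ioi 0, Real.exp ((t - r) * y) := by
        simp_rw [hdensity]
        rw [integral_indicator measurableSet_Ici, integral_Ici_eq_integral_Ioi, integral_const_mul]
    _ = r / (r - t) := by
        rw [integral_exp_mul_Ioi (by linarith), mul_zero, Real.exp_zero, ← neg_sub r t,
          neg_div_neg_eq, mul_one_div]

variable {Ω : Type*} [MeasurableSpace Ω] {μ : Measure Ω} [IsProbabilityMeasure μ] {X Y : Ω → ℝ}

lemma IndepFun.measureReal_le_comp_eq_integral_cdf (hXY : IndepFun X Y μ) (hX : Measurable X)
    (hY : Measurable Y) {g : ℝ → ℝ} (hg : Measurable g) :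
    μ.real {ω | X ω ≤ g (Y ω)} = ∫ y, cdf (μ.map X) (g y) ∂(μ.map Y) := by
  have hA : MeasurableSet {p : ℝ × ℝ | p.1 ≤ g p.2} :=
    measurableSet_le measurable_fst (hg.comp measurable_snd)
  have hcdf : Measurable fun y => cdf (μ.map X) (g y) := (cdf (μ.map X)).mono.measurable.comp hg
  have : IsProbabilityMeasure (μ.map X) := Measure.isProbabilityMeasure_map hX.aemeasurable
  have hprod : μ {ω | X ω ≤ g (Y ω)} = ∫⁻ y, μ.map X (Iic (g y)) ∂(μ.map Y) := by
    rw [show {ω | X ω ≤ g (Y ω)} = (fun ω => (X ω, Y ω)) ⁻¹' {p | p.1 ≤ g p.2} from rfl,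
      ← Measure.map_apply (hX.prodMk hY) hA,
      (indepFun_iff_map_prod_eq_prod_map_map hX.aemeasurable hY.aemeasurable).mp hXY,
      Measure.prod_apply_symm hA]
    rfl
  rw [measureReal_def, hprod, integral_eq_lintegral_of_nonneg_ae
    (ae_of_all _ fun y => cdf_nonneg _ _) hcdf.aestronglyMeasurable]
  simp_rw [ofReal_cdf]

lemma IndepFun.measureReal_le_mul_eq_one_sub_mgf (hXY : IndepFun X Y μ) (hX : Measurable X)
    (hY : Measurable Y) {r : ℝ} (hr : 0 < r) (hXexp : μ.map X = expMeasure r)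
    (hYnonneg : ∀ᵐ ω ∂μ, 0 ≤ Y ω) {x : ℝ} (hx : 0 ≤ x) :
    μ.real {ω | X ω ≤ x * Y ω} = 1 - mgf Y μ (-(r * x)) := by
  have : IsProbabilityMeasure (μ.map Y) := Measure.isProbabilityMeasure_map hY.aemeasurable
  have hY0 : ∀ᵐ y ∂(μ.map Y), 0 ≤ y := (ae_map_iff hY.aemeasurable measurableSet_Ici).mpr hYnonneg
  have hcdf : ∀ᵐ y ∂(μ.map Y), cdf (μ.map X) (x * y) = 1 - Real.exp (-(r * x) * y) := by
    filter_upwards [hY0] with y hy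
    rw [hXexp, cdf_expMeasure_eq hr, if_pos (mul_nonneg hx hy), ← mul_assoc, neg_mul]
  have hexp : Integrable (fun y => Real.exp (-(r * x) * y)) (μ.map Y) := by
    refine Integrable.of_bound (by fun_prop) 1 ?_
    filter_upwards [hY0] with y hy
    rw [Real.norm_of_nonneg (Real.exp_nonneg _), Real.exp_le_one_iff, neg_mul]
    exact neg_nonpos.mpr (by positivity)
  rw [hXY.measureReal_le_comp_eq_integral_cdf hX hY (measurable_const_mul x),
    integral_congr_ae hcdf, integral_sub (integrable_const 1) hexp, ← mgf_id_map hY.aemeasurable]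
  simp [mgf]

end ProbabilityTheory

theorem sinr_cdf_general_general
    {Ω : Type*} [MeasurableSpace Ω] (μ : Measure Ω) [IsProbabilityMeasure μ]
    (k : ℕ) (S Z : Ω → ℝ) (I : Fin k → Ω → ℝ)
    (lS : ℝ) (hlS : 0 < lS) (lam : Fin k → ℝ) (hlam : ∀ j, 0 < lam j)
    (hSm : Measurable S) (hZm : Measurable Z) (hIm : ∀ j, Measurable (I j))
    (f : Fin k ⊕ Bool → Ω → ℝ)
    (hf : f = Sum.elim I (fun b => if b then S else Z))
    (hindep : iIndepFun f μ)
    (hSdist : μ.map S = expMeasure lS)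
    (hIdist : ∀ j, μ.map (I j) = expMeasure (lam j))
    (hden : ∀ᵐ ω ∂μ, 0 < Z ω + ∑ j, I j ω)
    (x : ℝ) (hx : 0 ≤ x) :
    (μ {ω | S ω / (Z ω + ∑ j, I j ω) ≤ x}).toReal
      = 1 - (∫ ω, Real.exp (-(lS * x * Z ω)) ∂μ) * ∏ j, lam j / (lam j + lS * x) := by
  set D : Ω → ℝ := fun ω => Z ω + ∑ j, I j ω
  have hfm : ∀ i, Measurable (f i) := by
    subst hf
    rintro (j | _ | _) <;> simp [hIm, hSm, hZm]
  have hD : ∑ i ∈ Finset.univ.disjSum {false}, f i = D := by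
    subst hf
    ext ω
    simp [Finset.sum_disjSum, D, add_comm]
  have hSD : IndepFun S D μ := by
    have := (hindep.indepFun_finsetSum_of_notMem hfm (i := Sum.inr true)
      (s := Finset.univ.disjSum {false}) (by simp)).symm
    rwa [hD, hf] at this
  have hevent : μ {ω | S ω / D ω ≤ x} = μ {ω | S ω ≤ x * D ω} := by
    refine measure_congr (Filter.eventuallyEq_set.mpr ?_)
    filter_upwards [hden] with ω hω
    exact div_le_iff₀ hω
  have hmgf : mgf D μ (-(lS * x))
      = (∫ ω, Real.exp (-(lS * x * Z ω)) ∂μ) * ∏ j, lam j / (lam j + lS * x) := by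
    rw [← hD, hindep.mgf_sum hfm, Finset.prod_disjSum, mul_comm]
    subst hf
    congr 1
    · simp [mgf]
    · refine Finset.prod_congr rfl fun j _ => ?_
      rw [Sum.elim_inl, ← mgf_id_map (hIm j).aemeasurable, hIdist j,
        mgf_id_expMeasure (hlam j) (by linarith [hlam j, mul_nonneg hlS.le hx]), sub_neg_eq_add]
  calc (μ {ω | S ω / D ω ≤ x}).toReal = μ.real {ω | S ω ≤ x * D ω} := by rw [hevent]; rfl
    _ = 1 - mgf D μ (-(lS * x)) :=
        hSD.measureReal_le_mul_eq_one_sub_mgf hSm (by fun_prop) hlS hSdist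
          (hden.mono fun _ h => h.le) hx
    _ = _ := by rw [hmgf]

/-- CDF of the SINR `γ = S / (Z + Σ_j I_j)` with `S` exponential of rate `lS`,
`I_j` exponential of rates `lam j`, `Z` nonnegative, all mutually independent. -/
theorem sinr_cdf_general
    {Ω : Type*} [MeasurableSpace Ω] (μ : Measure Ω) [IsProbabilityMeasure μ]
    (k : ℕ) (S Z : Ω → ℝ) (I : Fin k → Ω → ℝ)
    (lS : ℝ) (hlS : 0 < lS) (lam : Fin k → ℝ) (hlam : ∀ j, 0 < lam j)
    (hSm : Measurable S) (hZm : Measurable Z) (hIm : ∀ j, Measurable (I j))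
    (f : Fin k ⊕ Bool → Ω → ℝ)
    (hf : f = Sum.elim I (fun b => if b then S else Z))
    (hindep : iIndepFun f μ)
    (hSdist : μ.map S = expMeasure lS)
    (hIdist : ∀ j, μ.map (I j) = expMeasure (lam j))
    (hZnonneg : ∀ᵐ ω ∂μ, 0 ≤ Z ω)
    (hden : ∀ᵐ ω ∂μ, 0 < Z ω + ∑ j, I j ω)
    (x : ℝ) (hx : 0 ≤ x) :
    (μ {ω | S ω / (Z ω + ∑ j, I j ω) ≤ x}).toReal
      = 1 - (∫ ω, Real.exp (-(lS * x * Z ω)) ∂μ) * ∏ j, lam j / (lam j + lS * x) :=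
  sinr_cdf_general_general μ k S Z I lS hlS lam hlam hSm hZm hIm f hf hindep hSdist hIdist hden x hx
end

section
/- Let S be exponentially distributed with rate λ_S, let I_1,...,I_k be independent exponentials with rates λ_1,...,λ_k, and let Z = W² with W Gaussian of mean 0 and variance N, all mutually independent. Then the SINR γ = S/(Z + Σ_j I_j) has CDF F_γ(x) = 1 − (1/√(1 + 2 λ_S N x)) · ∏_{j=1}^k λ_j/(λ_j + x λ_S) for all x ≥ 0. -/
/-!
Given the interference-plus-noise power `D = W² + ∑ j, I j`, which is independent of `S`, the
exponential tail of `S` gives `P(γ > x) = P(S > x D) = E[exp (-λ_S x D)]`, i.e. the moment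
generating function of `D` at `-λ_S x`. By independence it factorizes into the mgf of `W²`, a
scaled `χ²₁` variable, and the mgfs of the exponentials `I j`.
-/

open MeasureTheory ProbabilityTheory Real Set
open scoped NNReal ENNReal

lemma expMeasure_Ioi {r t : ℝ} (hr : 0 < r) (ht : 0 ≤ t) :
    expMeasure r (Ioi t) = ENNReal.ofReal (exp (-(r * t))) := by
  have := isProbabilityMeasure_expMeasure hr
  have hcdf := cdf_expMeasure_eq hr t
  rw [if_pos ht] at hcdf
  rw [← compl_Iic, prob_compl_eq_one_sub measurableSet_Iic, ← ofReal_cdf, hcdf,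
    ← ENNReal.ofReal_one, ← ENNReal.ofReal_sub _ (hcdf ▸ cdf_nonneg _ t), sub_sub_cancel]

lemma mgf_expMeasure {Ω : Type*} [MeasurableSpace Ω] {μ : Measure Ω} {X : Ω → ℝ}
    {r t : ℝ} (hr : 0 < r) (hX : μ.map X = expMeasure r) (ht : t < r) :
    mgf X μ t = r / (r - t) := by
  have := isProbabilityMeasure_expMeasure hr
  have hXm : AEMeasurable X μ := aemeasurable_of_map_neZero (by rw [hX]; infer_instance)
  have hdens (x : ℝ) : (gammaPDF 1 r x).toReal • exp (t * id x)
      = (Ici 0).indicator (fun x => r * exp ((t - r) * x)) x := by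
    rcases le_or_gt 0 x with hx | hx
    · rw [indicator_of_mem (mem_Ici.2 hx), gammaPDF_of_nonneg hx,
        ENNReal.toReal_ofReal (by positivity)]
      simp only [rpow_zero, sub_self, Gamma_one, div_one, rpow_one, id, smul_eq_mul]
      rw [mul_assoc, ← exp_add]
      ring_nf
    · rw [indicator_of_notMem (by simpa using hx), gammaPDF_of_neg hx, ENNReal.toReal_zero,
        zero_smul]
  have hmeas : Measurable (gammaPDF 1 r) := (measurable_gammaPDFReal 1 r).ennreal_ofReal
  rw [← mgf_id_map hXm, hX, mgf, expMeasure, gammaMeasure,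
    integral_withDensity_eq_integral_toReal_smul hmeas (ae_of_all _ fun _ => ENNReal.ofReal_lt_top)]
  simp_rw [hdens]
  rw [integral_indicator measurableSet_Ici, integral_Ici_eq_integral_Ioi, integral_const_mul,
    integral_exp_mul_Ioi (by linarith) 0, mul_zero, exp_zero, neg_div, ← div_neg, neg_sub,
    mul_one_div]

lemma mgf_sq_gaussianReal {Ω : Type*} [MeasurableSpace Ω] {μ : Measure Ω} {X : Ω → ℝ}
    {v : ℝ≥0} {t : ℝ} (hX : μ.map X = gaussianReal 0 v) (hvt : 2 * v * t < 1) :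
    mgf (fun ω => X ω ^ 2) μ t = 1 / √(1 - 2 * v * t) := by
  have hXm : AEMeasurable X μ := aemeasurable_of_map_neZero (by rw [hX]; infer_instance)
  change mgf ((· ^ 2) ∘ X) μ t = _
  rw [← mgf_map hXm (by fun_prop), hX]
  rcases eq_or_ne v 0 with rfl | hv
  · simp [gaussianReal_zero_var, mgf]
  have hvR : (0 : ℝ) < v := by positivity
  have hb : 0 < 1 / (2 * v) - t := by
    rw [sub_pos, lt_div_iff₀ (by positivity)]
    linarith
  have hdens (x : ℝ) : gaussianPDFReal 0 v x • exp (t * x ^ 2)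
      = (√(2 * π * v))⁻¹ * exp (-(1 / (2 * v) - t) * x ^ 2) := by
    rw [gaussianPDFReal, smul_eq_mul, mul_assoc, ← exp_add]
    congr 2
    field_simp
    ring
  rw [mgf, integral_gaussianReal_eq_integral_smul hv]
  simp_rw [hdens]
  rw [integral_const_mul, integral_gaussian, ← sqrt_inv, ← sqrt_mul (by positivity),
    one_div (√_), ← sqrt_inv (1 - _)]
  congr 1
  field_simp

lemma measureReal_lt_of_indepFun_expMeasure {Ω : Type*} [MeasurableSpace Ω] {μ : Measure Ω}
    [IsProbabilityMeasure μ] {D S : Ω → ℝ} {r : ℝ} (hr : 0 < r)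
    (hD : Measurable D) (hS : Measurable S) (hDS : IndepFun D S μ)
    (hSdist : μ.map S = expMeasure r) (hD0 : ∀ᵐ ω ∂μ, 0 ≤ D ω) :
    μ.real {ω | D ω < S ω} = mgf D μ (-r) := by
  have hset : MeasurableSet {p : ℝ × ℝ | p.1 < p.2} :=
    measurableSet_lt measurable_fst measurable_snd
  have hlaw := (indepFun_iff_map_prod_eq_prod_map_map hD.aemeasurable hS.aemeasurable).1 hDS
  have hprob : μ {ω | D ω < S ω} = ∫⁻ ω, ENNReal.ofReal (exp (-r * D ω)) ∂μ :=
    calc μ {ω | D ω < S ω} = μ.map (fun ω => (D ω, S ω)) {p | p.1 < p.2} :=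
          (Measure.map_apply (hD.prodMk hS) hset).symm
    _ = ∫⁻ d, expMeasure r (Ioi d) ∂(μ.map D) := by
          rw [hlaw, Measure.prod_apply hset, hSdist]
          rfl
    _ = ∫⁻ d, ENNReal.ofReal (exp (-r * d)) ∂(μ.map D) := by
          refine lintegral_congr_ae ?_
          filter_upwards [(ae_map_iff hD.aemeasurable measurableSet_Ici).2 hD0] with d hd
          rw [expMeasure_Ioi hr hd, neg_mul]
    _ = ∫⁻ ω, ENNReal.ofReal (exp (-r * D ω)) ∂μ := lintegral_map (by fun_prop) hD
  rw [measureReal_def, hprob, mgf, ← integral_eq_lintegral_of_nonneg_ae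
    (ae_of_all _ fun _ => (exp_pos _).le) (by fun_prop)]

lemma inr_false_add_sum_inl_eq_sum_cons {Ω ι : Type*} [Fintype ι]
    (X : ι ⊕ Bool → Ω → ℝ) :
    (fun ω => X (.inr false) ω + ∑ j, X (.inl j) ω)
      = ∑ i ∈ .cons (.inr false) (.map .inl .univ) (by simp), X i := by
  ext ω
  simp

namespace ProbabilityTheory.iIndepFun

variable {Ω ι : Type*} [MeasurableSpace Ω] {μ : Measure Ω} [Fintype ι]
  {X : ι ⊕ Bool → Ω → ℝ}

lemma indepFun_inr_false_add_sum_inl (h : iIndepFun X μ) (hX : ∀ i, Measurable (X i)) :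
    IndepFun (fun ω => X (.inr false) ω + ∑ j, X (.inl j) ω) (X (.inr true)) μ := by
  rw [inr_false_add_sum_inl_eq_sum_cons]
  exact h.indepFun_finsetSum_of_notMem hX (by simp)

lemma mgf_inr_false_add_sum_inl (h : iIndepFun X μ) (hX : ∀ i, Measurable (X i)) (t : ℝ) :
    mgf (fun ω => X (.inr false) ω + ∑ j, X (.inl j) ω) μ t
      = mgf (X (.inr false)) μ t * ∏ j, mgf (X (.inl j)) μ t := by
  rw [inr_false_add_sum_inl_eq_sum_cons, h.mgf_sum hX, Finset.prod_cons, Finset.prod_map]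
  rfl

lemma sumElim_ite_sq {κ : Type*} {I : κ → Ω → ℝ} {S W : Ω → ℝ}
    (h : iIndepFun (Sum.elim I fun b : Bool => if b then S else W) μ) :
    iIndepFun (Sum.elim I fun b : Bool => if b then S else fun ω => W ω ^ 2) μ := by
  let φ : κ ⊕ Bool → ℝ → ℝ := Sum.elim (fun _ => id) fun b => if b then id else (· ^ 2)
  have hφ : ∀ i, Measurable (φ i) := by
    rintro (_ | _ | _)
    exacts [measurable_id, measurable_id.pow_const 2, measurable_id]
  convert h.comp φ hφ using 1
  ext (_ | _ | _) <;> rfl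

end ProbabilityTheory.iIndepFun

theorem sinr_cdf_awgn_general
    {Ω : Type*} [MeasurableSpace Ω] (μ : Measure Ω) [IsProbabilityMeasure μ]
    (k : ℕ) (S W : Ω → ℝ) (I : Fin k → Ω → ℝ)
    (lS : ℝ) (hlS : 0 < lS) (lam : Fin k → ℝ) (hlam : ∀ j, 0 < lam j)
    (N : ℝ≥0)
    (hSm : Measurable S) (hWm : Measurable W) (hIm : ∀ j, Measurable (I j))
    (f : Fin k ⊕ Bool → Ω → ℝ)
    (hf : f = Sum.elim I (fun b => if b then S else W))
    (hindep : iIndepFun f μ)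
    (hSdist : μ.map S = expMeasure lS)
    (hIdist : ∀ j, μ.map (I j) = expMeasure (lam j))
    (hWdist : μ.map W = gaussianReal 0 N)
    (hden : ∀ᵐ ω ∂μ, 0 < (W ω) ^ 2 + ∑ j, I j ω)
    (x : ℝ) (hx : 0 ≤ x) :
    (μ {ω | S ω / ((W ω) ^ 2 + ∑ j, I j ω) ≤ x}).toReal
      = 1 - (1 / Real.sqrt (1 + 2 * lS * (N : ℝ) * x)) * ∏ j, lam j / (lam j + x * lS) := by
  subst hf
  set D : Ω → ℝ := fun ω => (W ω) ^ 2 + ∑ j, I j ω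
  let X : Fin k ⊕ Bool → Ω → ℝ := Sum.elim I fun b => if b then S else fun ω => W ω ^ 2
  have hX : iIndepFun X μ := hindep.sumElim_ite_sq
  have hXm : ∀ i, Measurable (X i) := by
    rintro (j | _ | _)
    exacts [hIm j, hWm.pow_const 2, hSm]
  have hmgf :
      mgf D μ (x * -lS) = 1 / √(1 + 2 * lS * N * x) * ∏ j, lam j / (lam j + x * lS) := by
    have hW := mgf_sq_gaussianReal hWdist (t := x * -lS)
      (by nlinarith [mul_nonneg (mul_nonneg N.coe_nonneg hx) hlS.le])
    have hI (j : Fin k) := mgf_expMeasure (hlam j) (hIdist j) (t := x * -lS)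
      (by nlinarith [hlam j])
    refine (hX.mgf_inr_false_add_sum_inl hXm _).trans ?_
    change mgf (fun ω => W ω ^ 2) μ _ * ∏ j, mgf (I j) μ _ = _
    rw [hW, Finset.prod_congr rfl fun j _ => hI j]
    ring_nf
  have hae : ({ω | S ω / D ω ≤ x} : Set Ω) =ᵐ[μ] ({ω | x * D ω < S ω}ᶜ : Set Ω) := by
    filter_upwards [hden] with ω hω
    change (S ω / D ω ≤ x) = ¬(x * D ω < S ω)
    rw [div_le_iff₀ hω, not_lt]
  rw [← measureReal_def, measureReal_congr hae,
    measureReal_compl (measurableSet_lt (by fun_prop) hSm), probReal_univ,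
    measureReal_lt_of_indepFun_expMeasure (D := fun ω => x * D ω) hlS (by fun_prop) hSm
      ((hX.indepFun_inr_false_add_sum_inl hXm).comp (measurable_const_mul x) measurable_id)
      hSdist (by filter_upwards [hden] with ω hω using by positivity),
    mgf_const_mul, hmgf]

/-- Proposition 1 of the paper: closed-form CDF of the SINR
`γ = S / (W² + Σ_j I_j)` with `S` exponential of rate `lS`, the `I j` exponential of rates
`lam j`, and `W` Gaussian with mean 0 and variance `N`, all mutually independent. -/
theorem sinr_cdf_awgn
    {Ω : Type*} [MeasurableSpace Ω] (μ : Measure Ω) [IsProbabilityMeasure μ]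
    (k : ℕ) (S W : Ω → ℝ) (I : Fin k → Ω → ℝ)
    (lS : ℝ) (hlS : 0 < lS) (lam : Fin k → ℝ) (hlam : ∀ j, 0 < lam j)
    (N : ℝ≥0) (hN : 0 < N)
    (hSm : Measurable S) (hWm : Measurable W) (hIm : ∀ j, Measurable (I j))
    (f : Fin k ⊕ Bool → Ω → ℝ)
    (hf : f = Sum.elim I (fun b => if b then S else W))
    (hindep : iIndepFun f μ)
    (hSdist : μ.map S = expMeasure lS)
    (hIdist : ∀ j, μ.map (I j) = expMeasure (lam j))
    (hWdist : μ.map W = gaussianReal 0 N)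
    (hden : ∀ᵐ ω ∂μ, 0 < (W ω) ^ 2 + ∑ j, I j ω)
    (x : ℝ) (hx : 0 ≤ x) :
    (μ {ω | S ω / ((W ω) ^ 2 + ∑ j, I j ω) ≤ x}).toReal
      = 1 - (1 / Real.sqrt (1 + 2 * lS * (N : ℝ) * x)) * ∏ j, lam j / (lam j + x * lS) :=
  sinr_cdf_awgn_general μ k S W I lS hlS lam hlam N hSm hWm hIm f hf hindep hSdist hIdist hWdist
    hden x hx
end
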